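/- Let ρ_BTN be a basic triangle network state and equip each party X ∈ {A, B, C} with the product observables {G_α^{X₁} ⊗ G_β^{X₂}} built from complete orthogonal sets of observables on C^d. Then Γ(ρ_BTN) = T_c + T_b + T_a + R, where: R is the block-diagonal matrix with X-block Γ({G_α}, ρ^{(X₁)}) ⊗ Γ({G_β}, ρ^{(X₂)}) for X = A, B, C; T_c is supported on the Alice and Bob sectors with (A,A)-block entries a_α^{(1)} a_{α'}^{(1)} · [Γ({G_β}, ρ^{(A₂)})]_{ββ'}, (B,B)-block entries b_δ^{(2)} b_{δ'}^{(2)} · [Γ({G_γ}, ρ^{(B₁)})]_{γγ'}, and (A,B)-block entries a_α^{(1)} b_δ^{(2)} · ( tr((G_β ⊗ G_γ) ρ_c) − tr(G_β ρ^{(A₂)}) tr(G_γ ρ^{(B₁)}) ), where a_α^{(1)} = tr(G_α ρ^{(A₁)}) and b_δ^{(2)} = tr(G_δ ρ^{(B₂)}); and T_b and T_a are defined analogously on the Alice–Charlie sectors from ρ_b and on the Bob–Charlie sectors from ρ_a. Moreover each of T_a, T_b, T_c and R is positive semidefinite. -/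

import Mathlib

open Matrix Kronecker BigOperators
open scoped ComplexOrder

noncomputable section

/-- Covariance matrix of a family of observables `M` in the state `ρ`. -/
def covMat {n ι : Type*} [Fintype n] (M : ι → Matrix n n ℂ) (ρ : Matrix n n ℂ) :
    Matrix ι ι ℂ :=
  Matrix.of fun i j => (M i * M j * ρ).trace - (M i * ρ).trace * (M j * ρ).trace

/-- A density matrix: positive semidefinite with unit trace. -/
def IsDensity {n : Type*} [Fintype n] (ρ : Matrix n n ℂ) : Prop :=
  ρ.PosSemidef ∧ ρ.trace = 1

/-- Partial trace over the first tensor factor. -/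
def ptrace₁ {m n : Type*} [Fintype m] (M : Matrix (m × n) (m × n) ℂ) : Matrix n n ℂ :=
  Matrix.of fun i j => ∑ k, M (k, i) (k, j)

/-- Partial trace over the second tensor factor. -/
def ptrace₂ {m n : Type*} [Fintype n] (M : Matrix (m × n) (m × n) ℂ) : Matrix m m ℂ :=
  Matrix.of fun i j => ∑ k, M (i, k) (j, k)

/-- Index of a two-qudit space. -/
abbrev D2 (d : ℕ) := Fin d × Fin d

/-- Index of the six-factor triangle-network space, ordered C₂, A₁, A₂, B₁, B₂, C₁. -/
abbrev TriIdx (d : ℕ) := D2 d × (D2 d × D2 d)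

/-- The basic triangle network state `ρ_b ⊗ ρ_c ⊗ ρ_a`. -/
def btnState {d : ℕ} (ρa ρb ρc : Matrix (D2 d) (D2 d) ℂ) :
    Matrix (TriIdx d) (TriIdx d) ℂ :=
  ρb ⊗ₖ (ρc ⊗ₖ ρa)

/-- Embed an observable of Alice (acting on A₁A₂) into the global space. -/
def embedA {d : ℕ} (M : Matrix (D2 d) (D2 d) ℂ) : Matrix (TriIdx d) (TriIdx d) ℂ :=
  Matrix.of fun p q =>
    if p.1.1 = q.1.1 ∧ p.2.1.2 = q.2.1.2 ∧ p.2.2 = q.2.2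
    then M (p.1.2, p.2.1.1) (q.1.2, q.2.1.1) else 0

/-- Embed an observable of Bob (acting on B₁B₂) into the global space. -/
def embedB {d : ℕ} (M : Matrix (D2 d) (D2 d) ℂ) : Matrix (TriIdx d) (TriIdx d) ℂ :=
  Matrix.of fun p q =>
    if p.1 = q.1 ∧ p.2.1.1 = q.2.1.1 ∧ p.2.2.2 = q.2.2.2
    then M (p.2.1.2, p.2.2.1) (q.2.1.2, q.2.2.1) else 0

/-- Embed an observable of Charlie (acting on C₁C₂) into the global space. -/
def embedC {d : ℕ} (M : Matrix (D2 d) (D2 d) ℂ) : Matrix (TriIdx d) (TriIdx d) ℂ :=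
  Matrix.of fun p q =>
    if p.1.2 = q.1.2 ∧ p.2.1 = q.2.1 ∧ p.2.2.1 = q.2.2.1
    then M (p.2.2.2, p.1.1) (q.2.2.2, q.1.1) else 0

section marginals
variable {d : ℕ} (ρa ρb ρc : Matrix (D2 d) (D2 d) ℂ)

/-- Marginal of ρ_BTN on A₁ (second factor of ρ_b = ρ^{C₂A₁}). -/
def margA1 : Matrix (Fin d) (Fin d) ℂ := ptrace₁ ρb
/-- Marginal on C₂. -/
def margC2 : Matrix (Fin d) (Fin d) ℂ := ptrace₂ ρb
/-- Marginal on A₂ (first factor of ρ_c = ρ^{A₂B₁}). -/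
def margA2 : Matrix (Fin d) (Fin d) ℂ := ptrace₂ ρc
/-- Marginal on B₁. -/
def margB1 : Matrix (Fin d) (Fin d) ℂ := ptrace₁ ρc
/-- Marginal on B₂ (first factor of ρ_a = ρ^{B₂C₁}). -/
def margB2 : Matrix (Fin d) (Fin d) ℂ := ptrace₂ ρa
/-- Marginal on C₁. -/
def margC1 : Matrix (Fin d) (Fin d) ℂ := ptrace₁ ρa

/-- Reduced observable A^(2) = tr_{A₁}(A (ρ^{A₁} ⊗ 1)). -/
def redA2 (M : Matrix (D2 d) (D2 d) ℂ) : Matrix (Fin d) (Fin d) ℂ :=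
  ptrace₁ (M * (margA1 ρb ⊗ₖ (1 : Matrix (Fin d) (Fin d) ℂ)))
/-- Reduced observable A^(1) = tr_{A₂}(A (1 ⊗ ρ^{A₂})). -/
def redA1 (M : Matrix (D2 d) (D2 d) ℂ) : Matrix (Fin d) (Fin d) ℂ :=
  ptrace₂ (M * ((1 : Matrix (Fin d) (Fin d) ℂ) ⊗ₖ margA2 ρc))
/-- Reduced observable B^(1) = tr_{B₂}(B (1 ⊗ ρ^{B₂})). -/
def redB1 (M : Matrix (D2 d) (D2 d) ℂ) : Matrix (Fin d) (Fin d) ℂ :=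
  ptrace₂ (M * ((1 : Matrix (Fin d) (Fin d) ℂ) ⊗ₖ margB2 ρa))
/-- Reduced observable B^(2) = tr_{B₁}(B (ρ^{B₁} ⊗ 1)). -/
def redB2 (M : Matrix (D2 d) (D2 d) ℂ) : Matrix (Fin d) (Fin d) ℂ :=
  ptrace₁ (M * (margB1 ρc ⊗ₖ (1 : Matrix (Fin d) (Fin d) ℂ)))
/-- Reduced observable C^(1) = tr_{C₂}(C (1 ⊗ ρ^{C₂})); here C acts on C₁C₂. -/
def redC1 (M : Matrix (D2 d) (D2 d) ℂ) : Matrix (Fin d) (Fin d) ℂ :=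
  ptrace₂ (M * ((1 : Matrix (Fin d) (Fin d) ℂ) ⊗ₖ margC2 ρb))
/-- Reduced observable C^(2) = tr_{C₁}(C (ρ^{C₁} ⊗ 1)). -/
def redC2 (M : Matrix (D2 d) (D2 d) ℂ) : Matrix (Fin d) (Fin d) ℂ :=
  ptrace₁ (M * (margC1 ρa ⊗ₖ (1 : Matrix (Fin d) (Fin d) ℂ)))

end marginals



section AuxLemmas

lemma kron_conjTranspose {l m p q : Type*} (A : Matrix l m ℂ) (B : Matrix p q ℂ) :
    (A ⊗ₖ B)ᴴ = Aᴴ ⊗ₖ Bᴴ := by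
  ext ⟨i, j⟩ ⟨k, l⟩
  simp [Matrix.conjTranspose_apply, Matrix.kroneckerMap_apply, mul_comm]

lemma kron_isHermitian {m n : Type*} {A : Matrix m m ℂ} {B : Matrix n n ℂ}
    (hA : A.IsHermitian) (hB : B.IsHermitian) : (A ⊗ₖ B).IsHermitian := by
  unfold Matrix.IsHermitian
  rw [kron_conjTranspose, hA.eq, hB.eq]

lemma smul_isHermitian {n : Type*} {c : ℂ} (hc : star c = c) {H : Matrix n n ℂ}
    (hH : H.IsHermitian) : (c • H).IsHermitian := by
  unfold Matrix.IsHermitian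
  rw [Matrix.conjTranspose_smul, hc, hH.eq]

open scoped MatrixOrder in
lemma psd_eq_conjTranspose_mul_self' {n : Type*} [Fintype n] [DecidableEq n]
    {A : Matrix n n ℂ} (h : A.PosSemidef) : ∃ B : Matrix n n ℂ, A = Bᴴ * B := by
  obtain ⟨B, hB⟩ := CStarAlgebra.nonneg_iff_eq_star_mul_self.mp h.nonneg
  exact ⟨B, hB⟩

lemma posSemidef_kron {m n : Type*} [Fintype m] [Fintype n]
    {A : Matrix m m ℂ} {B : Matrix n n ℂ} (hA : A.PosSemidef) (hB : B.PosSemidef) :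
    (A ⊗ₖ B).PosSemidef := by
  classical
  obtain ⟨P, rfl⟩ := psd_eq_conjTranspose_mul_self' hA
  obtain ⟨Q, rfl⟩ := psd_eq_conjTranspose_mul_self' hB
  rw [Matrix.mul_kronecker_mul, ← kron_conjTranspose]
  exact Matrix.posSemidef_conjTranspose_mul_self _

lemma trace_conjTranspose_mul_self_nonneg {m n : Type*} [Fintype m] [Fintype n]
    (A : Matrix m n ℂ) : 0 ≤ (Aᴴ * A).trace := by
  simp only [Matrix.trace, Matrix.diag, Matrix.mul_apply, Matrix.conjTranspose_apply]
  exact Finset.sum_nonneg fun i _ => Finset.sum_nonneg fun k _ => star_mul_self_nonneg _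

lemma trace_mul_mul_psd_nonneg {n : Type*} [Fintype n] (X ρ : Matrix n n ℂ)
    (hρ : ρ.PosSemidef) : 0 ≤ (Xᴴ * X * ρ).trace := by
  classical
  obtain ⟨B, rfl⟩ := psd_eq_conjTranspose_mul_self' hρ
  have h1 : Xᴴ * X * (Bᴴ * B) = (Xᴴ * X * Bᴴ) * B := by simp only [Matrix.mul_assoc]
  rw [h1, Matrix.trace_mul_comm,
    show B * (Xᴴ * X * Bᴴ) = (X * Bᴴ)ᴴ * (X * Bᴴ) from by
      rw [Matrix.conjTranspose_mul, Matrix.conjTranspose_conjTranspose]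
      simp only [Matrix.mul_assoc]]
  exact trace_conjTranspose_mul_self_nonneg _

lemma trace_mul_hermitian_star {n : Type*} [Fintype n] {M ρ : Matrix n n ℂ}
    (hM : M.IsHermitian) (hρ : ρ.IsHermitian) : star (M * ρ).trace = (M * ρ).trace := by
  rw [← Matrix.trace_conjTranspose, Matrix.conjTranspose_mul, hM.eq, hρ.eq,
    Matrix.trace_mul_comm]

lemma covMat_posSemidef {n ι : Type*} [Fintype n] [Fintype ι] [DecidableEq n]
    (M : ι → Matrix n n ℂ) (hM : ∀ i, (M i).IsHermitian)
    (ρ : Matrix n n ℂ) (hρ : IsDensity ρ) : (covMat M ρ).PosSemidef := by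
  set t : ι → ℂ := fun i => (M i * ρ).trace with ht
  have htr : ∀ i, star (t i) = t i := fun i =>
    trace_mul_hermitian_star (hM i) hρ.1.1
  set N : ι → Matrix n n ℂ := fun i => M i - t i • 1 with hN
  have hNh : ∀ i, (N i)ᴴ = N i := by
    intro i
    simp only [hN, Matrix.conjTranspose_sub, (hM i).eq, Matrix.conjTranspose_smul,
      Matrix.conjTranspose_one, htr i]
  have key : ∀ i j, (N i * N j * ρ).trace = covMat M ρ i j := by
    intro i j
    simp only [hN, Matrix.sub_mul, Matrix.mul_sub, Matrix.smul_mul, Matrix.mul_smul,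
      Matrix.one_mul, Matrix.mul_one, Matrix.trace_sub, Matrix.trace_smul, smul_smul,
      smul_eq_mul, covMat, Matrix.of_apply, hρ.2, mul_one]
    ring
  have hstar : ∀ i j, star ((M j * M i * ρ).trace) = (M i * M j * ρ).trace := by
    intro i j
    rw [← Matrix.trace_conjTranspose, Matrix.conjTranspose_mul, Matrix.conjTranspose_mul,
      (hM i).eq, (hM j).eq, hρ.1.1.eq, Matrix.trace_mul_comm]
  refine Matrix.PosSemidef.of_dotProduct_mulVec_nonneg ?_ ?_
  · refine Matrix.ext fun i j => ?_
    rw [Matrix.conjTranspose_apply]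
    simp only [covMat, Matrix.of_apply, star_sub, star_mul', hstar i j,
      trace_mul_hermitian_star (hM i) hρ.1.1, trace_mul_hermitian_star (hM j) hρ.1.1]
    ring
  · intro x
    set X : Matrix n n ℂ := ∑ j, x j • N j with hX
    have hXH : Xᴴ = ∑ j, star (x j) • N j := by
      simp only [hX, Matrix.conjTranspose_sum, Matrix.conjTranspose_smul, hNh]
    have expand : (Xᴴ * X * ρ).trace = ∑ i, ∑ j, (star (x i) * x j) * (N i * N j * ρ).trace := by
      rw [hXH, hX, Finset.sum_mul_sum, Finset.sum_mul, Matrix.trace_sum]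
      refine Finset.sum_congr rfl fun i _ => ?_
      rw [Finset.sum_mul, Matrix.trace_sum]
      refine Finset.sum_congr rfl fun j _ => ?_
      simp only [Matrix.smul_mul, Matrix.mul_smul, smul_smul, Matrix.trace_smul, smul_eq_mul]
      ring
    have qf : star x ⬝ᵥ covMat M ρ *ᵥ x = (Xᴴ * X * ρ).trace := by
      rw [expand]
      simp only [dotProduct, Matrix.mulVec, Pi.star_apply, key, Finset.mul_sum]
      exact Finset.sum_congr rfl fun i _ => Finset.sum_congr rfl fun j _ => by ring
    rw [qf]
    exact trace_mul_mul_psd_nonneg X ρ hρ.1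

lemma sum3_swap13 {α β γ M : Type*} [Fintype α] [Fintype β] [Fintype γ] [AddCommMonoid M]
    (f : α → β → γ → M) :
    ∑ a, ∑ b, ∑ c, f a b c = ∑ c, ∑ b, ∑ a, f a b c := by
  calc ∑ a, ∑ b, ∑ c, f a b c
      = ∑ b, ∑ a, ∑ c, f a b c := Finset.sum_comm
    _ = ∑ b, ∑ c, ∑ a, f a b c := Finset.sum_congr rfl fun b _ => Finset.sum_comm
    _ = ∑ c, ∑ b, ∑ a, f a b c := Finset.sum_comm

lemma sum3_rotate {α β γ M : Type*} [Fintype α] [Fintype β] [Fintype γ] [AddCommMonoid M]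
    (f : α → β → γ → M) :
    ∑ a, ∑ b, ∑ c, f a b c = ∑ c, ∑ a, ∑ b, f a b c := by
  calc ∑ a, ∑ b, ∑ c, f a b c
      = ∑ a, ∑ c, ∑ b, f a b c := Finset.sum_congr rfl fun a _ => Finset.sum_comm
    _ = ∑ c, ∑ a, ∑ b, f a b c := Finset.sum_comm

lemma ptrace₁_posSemidef {m n : Type*} [Fintype m] [Fintype n] [DecidableEq m]
    {M : Matrix (m × n) (m × n) ℂ} (h : M.PosSemidef) : (ptrace₁ M).PosSemidef := by
  refine Matrix.PosSemidef.of_dotProduct_mulVec_nonneg ?_ ?_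
  · refine Matrix.ext fun i j => ?_
    rw [Matrix.conjTranspose_apply]
    simp only [ptrace₁, Matrix.of_apply, star_sum]
    refine Finset.sum_congr rfl fun k _ => ?_
    rw [← Matrix.conjTranspose_apply, h.1.eq]
  · intro x
    have key : star x ⬝ᵥ ptrace₁ M *ᵥ x =
        ∑ k : m, star (fun p : m × n => if p.1 = k then x p.2 else 0) ⬝ᵥ
          M *ᵥ (fun p : m × n => if p.1 = k then x p.2 else 0) := by
      simp only [dotProduct, Matrix.mulVec, Pi.star_apply, apply_ite (star : ℂ → ℂ),
        star_zero, Fintype.sum_prod_type, ite_mul, mul_ite, zero_mul, mul_zero,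
        Finset.sum_ite_irrel, Finset.sum_const_zero, Finset.sum_ite_eq, Finset.sum_ite_eq',
        Finset.mem_univ, if_true, ptrace₁, Matrix.of_apply, Finset.sum_mul, Finset.mul_sum]
      exact sum3_rotate (fun a b c => star (x a) * (M (c, a) (c, b) * x b))
    rw [key]
    exact Finset.sum_nonneg fun k _ => h.dotProduct_mulVec_nonneg _

lemma ptrace₂_posSemidef {m n : Type*} [Fintype m] [Fintype n] [DecidableEq n]
    {M : Matrix (m × n) (m × n) ℂ} (h : M.PosSemidef) : (ptrace₂ M).PosSemidef := by
  refine Matrix.PosSemidef.of_dotProduct_mulVec_nonneg ?_ ?_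
  · refine Matrix.ext fun i j => ?_
    rw [Matrix.conjTranspose_apply]
    simp only [ptrace₂, Matrix.of_apply, star_sum]
    refine Finset.sum_congr rfl fun k _ => ?_
    rw [← Matrix.conjTranspose_apply, h.1.eq]
  · intro x
    have key : star x ⬝ᵥ ptrace₂ M *ᵥ x =
        ∑ k : n, star (fun p : m × n => if p.2 = k then x p.1 else 0) ⬝ᵥ
          M *ᵥ (fun p : m × n => if p.2 = k then x p.1 else 0) := by
      simp only [dotProduct, Matrix.mulVec, Pi.star_apply, apply_ite (star : ℂ → ℂ),
        star_zero, Fintype.sum_prod_type, ite_mul, mul_ite, zero_mul, mul_zero,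
        Finset.sum_ite_irrel, Finset.sum_const_zero, Finset.sum_ite_eq, Finset.sum_ite_eq',
        Finset.mem_univ, if_true, ptrace₂, Matrix.of_apply, Finset.sum_mul, Finset.mul_sum]
      exact sum3_rotate (fun a b c => star (x a) * (M (a, c) (b, c) * x b))
    rw [key]
    exact Finset.sum_nonneg fun k _ => h.dotProduct_mulVec_nonneg _

lemma ptrace₁_trace {m n : Type*} [Fintype m] [Fintype n]
    (M : Matrix (m × n) (m × n) ℂ) : (ptrace₁ M).trace = M.trace := by
  simp only [Matrix.trace, Matrix.diag, ptrace₁, Matrix.of_apply, Fintype.sum_prod_type]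
  rw [Finset.sum_comm]

lemma ptrace₂_trace {m n : Type*} [Fintype m] [Fintype n]
    (M : Matrix (m × n) (m × n) ℂ) : (ptrace₂ M).trace = M.trace := by
  simp only [Matrix.trace, Matrix.diag, ptrace₂, Matrix.of_apply, Fintype.sum_prod_type]

lemma ptrace₁_isDensity {m n : Type*} [Fintype m] [Fintype n] [DecidableEq m]
    {M : Matrix (m × n) (m × n) ℂ} (h : IsDensity M) : IsDensity (ptrace₁ M) :=
  ⟨ptrace₁_posSemidef h.1, by rw [ptrace₁_trace, h.2]⟩

lemma ptrace₂_isDensity {m n : Type*} [Fintype m] [Fintype n] [DecidableEq n]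
    {M : Matrix (m × n) (m × n) ℂ} (h : IsDensity M) : IsDensity (ptrace₂ M) :=
  ⟨ptrace₂_posSemidef h.1, by rw [ptrace₂_trace, h.2]⟩

lemma fromBlocks_zero_posSemidef {α β : Type*} [Fintype α] [Fintype β]
    {A : Matrix α α ℂ} {B : Matrix β β ℂ} (hA : A.PosSemidef) (hB : B.PosSemidef) :
    (Matrix.fromBlocks A 0 0 B).PosSemidef := by
  refine Matrix.PosSemidef.of_dotProduct_mulVec_nonneg ?_ ?_
  · refine Matrix.ext fun i j => ?_
    rw [Matrix.conjTranspose_apply]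
    rcases i with i | i <;> rcases j with j | j <;>
      simp only [Matrix.fromBlocks_apply₁₁, Matrix.fromBlocks_apply₁₂,
        Matrix.fromBlocks_apply₂₁, Matrix.fromBlocks_apply₂₂, Matrix.zero_apply, star_zero,
        ← Matrix.conjTranspose_apply, hA.1.eq, hB.1.eq]
  · intro x
    have key : star x ⬝ᵥ Matrix.fromBlocks A 0 0 B *ᵥ x =
        star (x ∘ Sum.inl) ⬝ᵥ A *ᵥ (x ∘ Sum.inl) + star (x ∘ Sum.inr) ⬝ᵥ B *ᵥ (x ∘ Sum.inr) := by
      simp only [dotProduct, Matrix.mulVec, Pi.star_apply, Fintype.sum_sum_type,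
        Matrix.fromBlocks_apply₁₁, Matrix.fromBlocks_apply₁₂, Matrix.fromBlocks_apply₂₁,
        Matrix.fromBlocks_apply₂₂, Matrix.zero_apply, zero_mul, mul_zero, Function.comp_apply,
        Finset.sum_const_zero, add_zero, zero_add]
    rw [key]
    exact add_nonneg (hA.dotProduct_mulVec_nonneg _) (hB.dotProduct_mulVec_nonneg _)

lemma trace_one_kron_mul {m n : Type*} [Fintype m] [Fintype n] [DecidableEq m]
    (M : Matrix n n ℂ) (ρ : Matrix (m × n) (m × n) ℂ) :
    (((1 : Matrix m m ℂ) ⊗ₖ M) * ρ).trace = (M * ptrace₁ ρ).trace := by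
  simp only [Matrix.trace, Matrix.diag, Matrix.mul_apply, ptrace₁, Matrix.of_apply,
    Fintype.sum_prod_type, Matrix.kroneckerMap_apply, Matrix.one_apply, ite_mul, one_mul,
    zero_mul, mul_ite, mul_zero, Finset.sum_ite_irrel, Finset.sum_const_zero,
    Finset.sum_ite_eq, Finset.sum_ite_eq', Finset.mem_univ, if_true, Finset.mul_sum]
  rw [Finset.sum_comm]
  refine Finset.sum_congr rfl fun k _ => ?_
  rw [Finset.sum_comm]

lemma trace_kron_one_mul {m n : Type*} [Fintype m] [Fintype n] [DecidableEq n]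
    (M : Matrix m m ℂ) (ρ : Matrix (m × n) (m × n) ℂ) :
    ((M ⊗ₖ (1 : Matrix n n ℂ)) * ρ).trace = (M * ptrace₂ ρ).trace := by
  simp only [Matrix.trace, Matrix.diag, Matrix.mul_apply, ptrace₂, Matrix.of_apply,
    Fintype.sum_prod_type, Matrix.kroneckerMap_apply, Matrix.one_apply, mul_ite, ite_mul,
    mul_one, mul_zero, zero_mul, Finset.sum_ite_irrel, Finset.sum_const_zero,
    Finset.sum_ite_eq, Finset.sum_ite_eq', Finset.mem_univ, if_true, Finset.mul_sum]
  refine Finset.sum_congr rfl fun i _ => ?_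
  rw [Finset.sum_comm]

end AuxLemmas

section EmbedLemmas
variable {d : ℕ}

lemma embedA_kron (G H : Matrix (Fin d) (Fin d) ℂ) :
    embedA (G ⊗ₖ H) = ((1 : Matrix (Fin d) (Fin d) ℂ) ⊗ₖ G) ⊗ₖ
      ((H ⊗ₖ (1 : Matrix (Fin d) (Fin d) ℂ)) ⊗ₖ (1 : Matrix (D2 d) (D2 d) ℂ)) := by
  ext ⟨⟨c2, a1⟩, ⟨⟨a2, b1⟩, bc⟩⟩ ⟨⟨c2', a1'⟩, ⟨⟨a2', b1'⟩, bc'⟩⟩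
  simp only [embedA, Matrix.of_apply, Matrix.kroneckerMap_apply, Matrix.one_apply]
  split_ifs with h <;> simp_all <;> ring

lemma embedB_kron (G H : Matrix (Fin d) (Fin d) ℂ) :
    embedB (G ⊗ₖ H) = (1 : Matrix (D2 d) (D2 d) ℂ) ⊗ₖ
      (((1 : Matrix (Fin d) (Fin d) ℂ) ⊗ₖ G) ⊗ₖ (H ⊗ₖ (1 : Matrix (Fin d) (Fin d) ℂ))) := by
  ext ⟨ca, ⟨⟨a2, b1⟩, ⟨b2, c1⟩⟩⟩ ⟨ca', ⟨⟨a2', b1'⟩, ⟨b2', c1'⟩⟩⟩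
  simp only [embedB, Matrix.of_apply, Matrix.kroneckerMap_apply, Matrix.one_apply]
  split_ifs with h <;> simp_all <;> ring

lemma embedC_kron (G H : Matrix (Fin d) (Fin d) ℂ) :
    embedC (G ⊗ₖ H) = (H ⊗ₖ (1 : Matrix (Fin d) (Fin d) ℂ)) ⊗ₖ
      ((1 : Matrix (D2 d) (D2 d) ℂ) ⊗ₖ ((1 : Matrix (Fin d) (Fin d) ℂ) ⊗ₖ G)) := by
  ext ⟨⟨c2, a1⟩, ⟨ab, ⟨b2, c1⟩⟩⟩ ⟨⟨c2', a1'⟩, ⟨ab', ⟨b2', c1'⟩⟩⟩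
  simp only [embedC, Matrix.of_apply, Matrix.kroneckerMap_apply, Matrix.one_apply]
  split_ifs with h <;> simp_all <;> ring

end EmbedLemmas

set_option maxHeartbeats 4000000 in
/-- Explicit block decomposition `Γ(ρ_BTN) = T_c + T_b + T_a + R`
for complete orthogonal sets of product observables; all four summands are
positive semidefinite. -/
theorem stmt5 {d : ℕ} (hd : 1 ≤ d)
    (ρa ρb ρc : Matrix (D2 d) (D2 d) ℂ)
    (hρa : IsDensity ρa) (hρb : IsDensity ρb) (hρc : IsDensity ρc)
    (GA1 GA2 GB1 GB2 GC1 GC2 : Fin (d ^ 2) → Matrix (Fin d) (Fin d) ℂ)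
    (hGA1herm : ∀ α, (GA1 α).IsHermitian) (hGA2herm : ∀ β, (GA2 β).IsHermitian)
    (hGB1herm : ∀ γ, (GB1 γ).IsHermitian) (hGB2herm : ∀ δ, (GB2 δ).IsHermitian)
    (hGC1herm : ∀ ε, (GC1 ε).IsHermitian) (hGC2herm : ∀ ζ, (GC2 ζ).IsHermitian)
    (hGA1 : ∀ α α', (GA1 α * GA1 α').trace = if α = α' then (d : ℂ) else 0)
    (hGA2 : ∀ β β', (GA2 β * GA2 β').trace = if β = β' then (d : ℂ) else 0)
    (hGB1 : ∀ γ γ', (GB1 γ * GB1 γ').trace = if γ = γ' then (d : ℂ) else 0)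
    (hGB2 : ∀ δ δ', (GB2 δ * GB2 δ').trace = if δ = δ' then (d : ℂ) else 0)
    (hGC1 : ∀ ε ε', (GC1 ε * GC1 ε').trace = if ε = ε' then (d : ℂ) else 0)
    (hGC2 : ∀ ζ ζ', (GC2 ζ * GC2 ζ').trace = if ζ = ζ' then (d : ℂ) else 0)
    -- Bloch coefficients of the single-qudit marginals of ρ_BTN
    (aA1 : Fin (d ^ 2) → ℂ) (haA1 : ∀ α, aA1 α = (GA1 α * margA1 ρb).trace)
    (aA2 : Fin (d ^ 2) → ℂ) (haA2 : ∀ β, aA2 β = (GA2 β * margA2 ρc).trace)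
    (bB1 : Fin (d ^ 2) → ℂ) (hbB1 : ∀ γ, bB1 γ = (GB1 γ * margB1 ρc).trace)
    (bB2 : Fin (d ^ 2) → ℂ) (hbB2 : ∀ δ, bB2 δ = (GB2 δ * margB2 ρa).trace)
    (cC1 : Fin (d ^ 2) → ℂ) (hcC1 : ∀ ε, cC1 ε = (GC1 ε * margC1 ρa).trace)
    (cC2 : Fin (d ^ 2) → ℂ) (hcC2 : ∀ ζ, cC2 ζ = (GC2 ζ * margC2 ρb).trace)
    -- the covariance matrix of the full family of product observables on ρ_BTN
    (Γ Tc Tb Ta R : Matrix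
      ((Fin (d ^ 2) × Fin (d ^ 2)) ⊕ ((Fin (d ^ 2) × Fin (d ^ 2)) ⊕ (Fin (d ^ 2) × Fin (d ^ 2))))
      ((Fin (d ^ 2) × Fin (d ^ 2)) ⊕ ((Fin (d ^ 2) × Fin (d ^ 2)) ⊕ (Fin (d ^ 2) × Fin (d ^ 2))))
      ℂ)
    (hΓ : Γ = covMat
      (Sum.elim (fun p => embedA (GA1 p.1 ⊗ₖ GA2 p.2))
        (Sum.elim (fun p => embedB (GB1 p.1 ⊗ₖ GB2 p.2))
          (fun p => embedC (GC1 p.1 ⊗ₖ GC2 p.2))))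
      (btnState ρa ρb ρc))
    -- T_c, supported on the Alice and Bob sectors (source ρ_c)
    (hTc : Tc = Matrix.of fun p q => match p, q with
      | Sum.inl (α, β), Sum.inl (α', β') =>
          aA1 α * aA1 α' * covMat GA2 (margA2 ρc) β β'
      | Sum.inl (α, β), Sum.inr (Sum.inl (γ, δ)) =>
          aA1 α * bB2 δ * (((GA2 β ⊗ₖ GB1 γ) * ρc).trace -
            (GA2 β * margA2 ρc).trace * (GB1 γ * margB1 ρc).trace)
      | Sum.inr (Sum.inl (γ, δ)), Sum.inl (α, β) =>
          aA1 α * bB2 δ * (((GA2 β ⊗ₖ GB1 γ) * ρc).trace -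
            (GA2 β * margA2 ρc).trace * (GB1 γ * margB1 ρc).trace)
      | Sum.inr (Sum.inl (γ, δ)), Sum.inr (Sum.inl (γ', δ')) =>
          bB2 δ * bB2 δ' * covMat GB1 (margB1 ρc) γ γ'
      | _, _ => 0)
    -- T_b, supported on the Alice and Charlie sectors (source ρ_b, ordered C₂A₁)
    (hTb : Tb = Matrix.of fun p q => match p, q with
      | Sum.inl (α, β), Sum.inl (α', β') =>
          aA2 β * aA2 β' * covMat GA1 (margA1 ρb) α α'
      | Sum.inl (α, β), Sum.inr (Sum.inr (ε, ζ)) =>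
          aA2 β * cC1 ε * (((GC2 ζ ⊗ₖ GA1 α) * ρb).trace -
            (GC2 ζ * margC2 ρb).trace * (GA1 α * margA1 ρb).trace)
      | Sum.inr (Sum.inr (ε, ζ)), Sum.inl (α, β) =>
          aA2 β * cC1 ε * (((GC2 ζ ⊗ₖ GA1 α) * ρb).trace -
            (GC2 ζ * margC2 ρb).trace * (GA1 α * margA1 ρb).trace)
      | Sum.inr (Sum.inr (ε, ζ)), Sum.inr (Sum.inr (ε', ζ')) =>
          cC1 ε * cC1 ε' * covMat GC2 (margC2 ρb) ζ ζ'
      | _, _ => 0)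
    -- T_a, supported on the Bob and Charlie sectors (source ρ_a, ordered B₂C₁)
    (hTa : Ta = Matrix.of fun p q => match p, q with
      | Sum.inr (Sum.inl (γ, δ)), Sum.inr (Sum.inl (γ', δ')) =>
          bB1 γ * bB1 γ' * covMat GB2 (margB2 ρa) δ δ'
      | Sum.inr (Sum.inl (γ, δ)), Sum.inr (Sum.inr (ε, ζ)) =>
          bB1 γ * cC2 ζ * (((GB2 δ ⊗ₖ GC1 ε) * ρa).trace -
            (GB2 δ * margB2 ρa).trace * (GC1 ε * margC1 ρa).trace)
      | Sum.inr (Sum.inr (ε, ζ)), Sum.inr (Sum.inl (γ, δ)) =>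
          bB1 γ * cC2 ζ * (((GB2 δ ⊗ₖ GC1 ε) * ρa).trace -
            (GB2 δ * margB2 ρa).trace * (GC1 ε * margC1 ρa).trace)
      | Sum.inr (Sum.inr (ε, ζ)), Sum.inr (Sum.inr (ε', ζ')) =>
          cC2 ζ * cC2 ζ' * covMat GC1 (margC1 ρa) ε ε'
      | _, _ => 0)
    -- R, block-diagonal with Kronecker-product blocks
    (hR : R = Matrix.of fun p q => match p, q with
      | Sum.inl p', Sum.inl q' =>
          (covMat GA1 (margA1 ρb) ⊗ₖ covMat GA2 (margA2 ρc)) p' q'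
      | Sum.inr (Sum.inl p'), Sum.inr (Sum.inl q') =>
          (covMat GB1 (margB1 ρc) ⊗ₖ covMat GB2 (margB2 ρa)) p' q'
      | Sum.inr (Sum.inr p'), Sum.inr (Sum.inr q') =>
          (covMat GC1 (margC1 ρa) ⊗ₖ covMat GC2 (margC2 ρb)) p' q'
      | _, _ => 0) :
    Γ = Tc + Tb + Ta + R ∧
      Tc.PosSemidef ∧ Tb.PosSemidef ∧ Ta.PosSemidef ∧ R.PosSemidef := by
    classical
  have hmA1 : IsDensity (margA1 ρb) := ptrace₁_isDensity hρb
  have hmC2 : IsDensity (margC2 ρb) := ptrace₂_isDensity hρb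
  have hmA2 : IsDensity (margA2 ρc) := ptrace₂_isDensity hρc
  have hmB1 : IsDensity (margB1 ρc) := ptrace₁_isDensity hρc
  have hmB2 : IsDensity (margB2 ρa) := ptrace₂_isDensity hρa
  have hmC1 : IsDensity (margC1 ρa) := ptrace₁_isDensity hρa
  have raA1 : ∀ α, star (aA1 α) = aA1 α := fun α => by
    rw [haA1]; exact trace_mul_hermitian_star (hGA1herm α) hmA1.1.1
  have raA2 : ∀ β, star (aA2 β) = aA2 β := fun β => by
    rw [haA2]; exact trace_mul_hermitian_star (hGA2herm β) hmA2.1.1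
  have rbB1 : ∀ γ, star (bB1 γ) = bB1 γ := fun γ => by
    rw [hbB1]; exact trace_mul_hermitian_star (hGB1herm γ) hmB1.1.1
  have rbB2 : ∀ δ, star (bB2 δ) = bB2 δ := fun δ => by
    rw [hbB2]; exact trace_mul_hermitian_star (hGB2herm δ) hmB2.1.1
  have rcC1 : ∀ ε, star (cC1 ε) = cC1 ε := fun ε => by
    rw [hcC1]; exact trace_mul_hermitian_star (hGC1herm ε) hmC1.1.1
  have rcC2 : ∀ ζ, star (cC2 ζ) = cC2 ζ := fun ζ => by
    rw [hcC2]; exact trace_mul_hermitian_star (hGC2herm ζ) hmC2.1.1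
  refine ⟨?_, ?_, ?_, ?_, ?_⟩
  · -- the decomposition Γ = Tc + Tb + Ta + R
    rw [hΓ, hTc, hTb, hTa, hR]
    ext p q
    rcases p with ⟨α, β⟩ | ⟨γ, δ⟩ | ⟨ε, ζ⟩ <;> rcases q with ⟨α', β'⟩ | ⟨γ', δ'⟩ | ⟨ε', ζ'⟩ <;>
      · simp only [Matrix.add_apply, Matrix.of_apply, Sum.elim_inl, Sum.elim_inr, covMat,
          btnState, embedA_kron, embedB_kron, embedC_kron, ← Matrix.mul_kronecker_mul,
          Matrix.one_mul, Matrix.mul_one, Matrix.trace_kronecker, trace_one_kron_mul,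
          trace_kron_one_mul, Matrix.kroneckerMap_apply, margA1, margA2, margB1, margB2,
          margC1, margC2, hρa.2, hρb.2, hρc.2, haA1, haA2, hbB1, hbB2, hcC1, hcC2,
          mul_one, one_mul, mul_zero, zero_mul, add_zero, zero_add]
        ring
  · -- Tc is PSD
    have e : Tc = covMat
        (Sum.elim (fun p : Fin (d ^ 2) × Fin (d ^ 2) =>
            aA1 p.1 • (GA2 p.2 ⊗ₖ (1 : Matrix (Fin d) (Fin d) ℂ)))
          (Sum.elim (fun p : Fin (d ^ 2) × Fin (d ^ 2) =>
              bB2 p.2 • ((1 : Matrix (Fin d) (Fin d) ℂ) ⊗ₖ GB1 p.1))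
            (fun _ : Fin (d ^ 2) × Fin (d ^ 2) => (0 : Matrix (D2 d) (D2 d) ℂ)))) ρc := by
      rw [hTc]
      ext p q
      rcases p with ⟨α, β⟩ | ⟨γ, δ⟩ | ⟨ε, ζ⟩ <;> rcases q with ⟨α', β'⟩ | ⟨γ', δ'⟩ | ⟨ε', ζ'⟩ <;>
        · simp only [covMat, Matrix.of_apply, Sum.elim_inl, Sum.elim_inr, Matrix.smul_mul,
            Matrix.mul_smul, Matrix.trace_smul, smul_eq_mul, ← Matrix.mul_kronecker_mul,
            Matrix.one_mul, Matrix.mul_one, trace_kron_one_mul, trace_one_kron_mul,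
            margA2, margB1, Matrix.zero_mul, Matrix.mul_zero, Matrix.trace_zero,
            mul_zero, zero_mul, sub_zero]
          try ring
    rw [e]
    refine covMat_posSemidef _ ?_ ρc hρc
    rintro ((⟨α, β⟩ | (⟨γ, δ⟩ | ⟨ε, ζ⟩)))
    · exact smul_isHermitian (raA1 α) (kron_isHermitian (hGA2herm β) Matrix.isHermitian_one)
    · exact smul_isHermitian (rbB2 δ) (kron_isHermitian Matrix.isHermitian_one (hGB1herm γ))
    · exact Matrix.isHermitian_zero
  · -- Tb is PSD
    have e : Tb = covMat
        (Sum.elim (fun p : Fin (d ^ 2) × Fin (d ^ 2) =>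
            aA2 p.2 • ((1 : Matrix (Fin d) (Fin d) ℂ) ⊗ₖ GA1 p.1))
          (Sum.elim (fun _ : Fin (d ^ 2) × Fin (d ^ 2) => (0 : Matrix (D2 d) (D2 d) ℂ))
            (fun p : Fin (d ^ 2) × Fin (d ^ 2) =>
              cC1 p.1 • (GC2 p.2 ⊗ₖ (1 : Matrix (Fin d) (Fin d) ℂ))))) ρb := by
      rw [hTb]
      ext p q
      rcases p with ⟨α, β⟩ | ⟨γ, δ⟩ | ⟨ε, ζ⟩ <;> rcases q with ⟨α', β'⟩ | ⟨γ', δ'⟩ | ⟨ε', ζ'⟩ <;>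
        · simp only [covMat, Matrix.of_apply, Sum.elim_inl, Sum.elim_inr, Matrix.smul_mul,
            Matrix.mul_smul, Matrix.trace_smul, smul_eq_mul, ← Matrix.mul_kronecker_mul,
            Matrix.one_mul, Matrix.mul_one, trace_kron_one_mul, trace_one_kron_mul,
            margA1, margC2, Matrix.zero_mul, Matrix.mul_zero, Matrix.trace_zero,
            mul_zero, zero_mul, sub_zero]
          try ring
    rw [e]
    refine covMat_posSemidef _ ?_ ρb hρb
    rintro ((⟨α, β⟩ | (⟨γ, δ⟩ | ⟨ε, ζ⟩)))
    · exact smul_isHermitian (raA2 β) (kron_isHermitian Matrix.isHermitian_one (hGA1herm α))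
    · exact Matrix.isHermitian_zero
    · exact smul_isHermitian (rcC1 ε) (kron_isHermitian (hGC2herm ζ) Matrix.isHermitian_one)
  · -- Ta is PSD
    have e : Ta = covMat
        (Sum.elim (fun _ : Fin (d ^ 2) × Fin (d ^ 2) => (0 : Matrix (D2 d) (D2 d) ℂ))
          (Sum.elim (fun p : Fin (d ^ 2) × Fin (d ^ 2) =>
              bB1 p.1 • (GB2 p.2 ⊗ₖ (1 : Matrix (Fin d) (Fin d) ℂ)))
            (fun p : Fin (d ^ 2) × Fin (d ^ 2) =>
              cC2 p.2 • ((1 : Matrix (Fin d) (Fin d) ℂ) ⊗ₖ GC1 p.1)))) ρa := by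
      rw [hTa]
      ext p q
      rcases p with ⟨α, β⟩ | ⟨γ, δ⟩ | ⟨ε, ζ⟩ <;> rcases q with ⟨α', β'⟩ | ⟨γ', δ'⟩ | ⟨ε', ζ'⟩ <;>
        · simp only [covMat, Matrix.of_apply, Sum.elim_inl, Sum.elim_inr, Matrix.smul_mul,
            Matrix.mul_smul, Matrix.trace_smul, smul_eq_mul, ← Matrix.mul_kronecker_mul,
            Matrix.one_mul, Matrix.mul_one, trace_kron_one_mul, trace_one_kron_mul,
            margB2, margC1, Matrix.zero_mul, Matrix.mul_zero, Matrix.trace_zero,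
            mul_zero, zero_mul, sub_zero]
          try ring
    rw [e]
    refine covMat_posSemidef _ ?_ ρa hρa
    rintro ((⟨α, β⟩ | (⟨γ, δ⟩ | ⟨ε, ζ⟩)))
    · exact Matrix.isHermitian_zero
    · exact smul_isHermitian (rbB1 γ) (kron_isHermitian (hGB2herm δ) Matrix.isHermitian_one)
    · exact smul_isHermitian (rcC2 ζ) (kron_isHermitian Matrix.isHermitian_one (hGC1herm ε))
  · -- R is PSD
    have e : R = Matrix.fromBlocks (covMat GA1 (margA1 ρb) ⊗ₖ covMat GA2 (margA2 ρc)) 0 0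
        (Matrix.fromBlocks (covMat GB1 (margB1 ρc) ⊗ₖ covMat GB2 (margB2 ρa)) 0 0
          (covMat GC1 (margC1 ρa) ⊗ₖ covMat GC2 (margC2 ρb))) := by
      rw [hR]
      ext p q
      rcases p with p | p | p <;> rcases q with q | q | q <;> rfl
    rw [e]
    exact fromBlocks_zero_posSemidef
      (posSemidef_kron (covMat_posSemidef GA1 hGA1herm _ hmA1) (covMat_posSemidef GA2 hGA2herm _ hmA2))
      (fromBlocks_zero_posSemidef
        (posSemidef_kron (covMat_posSemidef GB1 hGB1herm _ hmB1) (covMat_posSemidef GB2 hGB2herm _ hmB2))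
        (posSemidef_kron (covMat_posSemidef GC1 hGC1herm _ hmC1) (covMat_posSemidef GC2 hGC2herm _ hmC2)))
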